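/- Let G be a finite abelian group with |G| ≥ 3. Then for every k ∈ ℕ, k·D(G) + 1 ≤ ρ_{2k+1}(G) ≤ k·D(G) + ⌊D(G)/2⌋. -/

import Mathlib

/-!
Weigh a sequence `S` by `|S| + v₀(S)`, its length plus the multiplicity of `0`. This weight is
additive, every atom has weight at least `2` (the atom `0` is the only one of length `1`), and
once `D(G) ≥ 2` every atom has weight at most `D(G)`. So if a product of `2k+1` atoms is also a
product of `m` atoms, then `2m ≤ (2k+1) D(G)`.
Conversely, for an atom `U = g₁ ⋯ g_D` of maximal length, `U^k (-U)^k 0` is a product of `2k+1`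
atoms which also factors as the product of `0` and of `k` copies of each `gᵢ(-gᵢ)`: `kD + 1`
atoms.
-/

open scoped Pointwise

section Defs

variable (G : Type*) [AddCommGroup G]

/-- `S` is a minimal zero-sum sequence (an atom of the monoid `B(G)` of zero-sum
sequences): it is nonempty, has sum zero, and no proper nonempty subsequence has sum zero. -/
def IsMinZS (S : Multiset G) : Prop :=
  S ≠ 0 ∧ S.sum = 0 ∧ ∀ T : Multiset G, T ≤ S → T ≠ 0 → T ≠ S → T.sum ≠ 0

/-- `S` is a product of `k` atoms of `B(G)`. -/
def IsProdOfAtoms (k : ℕ) (S : Multiset G) : Prop :=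
  ∃ L : Multiset (Multiset G), Multiset.card L = k ∧ (∀ U ∈ L, IsMinZS G U) ∧ L.sum = S

/-- `S` is a product of atoms of length `2`. -/
def IsProd2Atoms (S : Multiset G) : Prop :=
  ∃ L : Multiset (Multiset G), (∀ U ∈ L, IsMinZS G U ∧ Multiset.card U = 2) ∧ L.sum = S

/-- The set of lengths of `A` in `B(G)`. -/
def LSet (A : Multiset G) : Set ℕ := { k | IsProdOfAtoms G k A }

/-- `U_k(G)`: the set of `m` such that some product of `k` atoms equals a product of `m` atoms. -/
def UkSet (k : ℕ) : Set ℕ :=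
  { m | ∃ S : Multiset G, IsProdOfAtoms G k S ∧ IsProdOfAtoms G m S }

/-- `ρ_k(G) = sup U_k(G)`. -/
noncomputable def rho (k : ℕ) : ℕ := sSup (UkSet G k)

/-- The Davenport constant `D(G)`: the maximal length of a minimal zero-sum sequence. -/
noncomputable def Dav : ℕ :=
  sSup { n : ℕ | ∃ S : Multiset G, IsMinZS G S ∧ Multiset.card S = n }

/-- `A` is pair-nice with factorization into `2k` atoms of length `d` (where `d` plays
the role of `D^*(G)`). -/
def PairNiceWith (d k : ℕ) (A : Multiset G) : Prop :=
  1 ≤ k ∧ ∃ (U : Fin (2 * k) → Multiset G) (g : Fin (2 * k) → G),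
    (∀ i, IsMinZS G (U i) ∧ Multiset.card (U i) = d) ∧
    (∑ i, U i) = A ∧ (∀ i, g i ∈ U i) ∧
    IsProd2Atoms G (∑ i, ({g i} : Multiset G))

/-- `A` is pair-nice (with respect to `G`, with `d = D^*(G)`). -/
def PairNice (d : ℕ) (A : Multiset G) : Prop := ∃ k, PairNiceWith G d k A

/-- `A` is nice with factorization into `2k+1` atoms of length `d` (where `d` plays the
role of `D^*(G)`), as in Definition 3.1 of the paper. -/
def NiceWith [DecidableEq G] (d k : ℕ) (A : Multiset G) : Prop :=
  1 ≤ k ∧ ∃ (U : Fin (2 * k + 1) → Multiset G) (g : Fin (2 * k + 1) → G),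
    (∀ i, IsMinZS G (U i) ∧ Multiset.card (U i) = d) ∧
    (∑ i, U i) = A ∧ (∀ i, g i ∈ U i) ∧
    ((Odd d ∧ IsProd2Atoms G (A - ∑ i, ({g i} : Multiset G)) ∧
        ∃ W : Fin k → Multiset G, (∀ j, IsMinZS G (W j)) ∧
          (∀ j : Fin k, Multiset.card (W j) = if (j : ℕ) = 0 then 3 else 2) ∧
          (∑ j, W j) = ∑ i, ({g i} : Multiset G)) ∨
      (Even d ∧ ∃ h : G, h ∈ A - ∑ i, ({g i} : Multiset G) ∧
        IsProd2Atoms G (A - ((∑ i, ({g i} : Multiset G)) + {h})) ∧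
        IsProd2Atoms G ((∑ i, ({g i} : Multiset G)) + {h})))

/-- `A` is nice (with respect to `G`, with `d = D^*(G)`). -/
def Nice [DecidableEq G] (d : ℕ) (A : Multiset G) : Prop := ∃ k, NiceWith G d k A

end Defs

section MonoidDefs

variable (H : Type*) [CommMonoid H]

/-- `U_k(H)` for a monoid `H`: the set of `m` such that some product of `k` irreducible
elements (atoms) of `H` equals a product of `m` atoms. -/
def UkM (k : ℕ) : Set ℕ :=
  { m | ∃ L L' : Multiset H, Multiset.card L = k ∧ Multiset.card L' = m ∧
      (∀ u ∈ L, Irreducible u) ∧ (∀ v ∈ L', Irreducible v) ∧ L.prod = L'.prod }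

/-- `ρ_k(H) = sup U_k(H)`. -/
noncomputable def rhoM (k : ℕ) : ℕ := sSup (UkM H k)

end MonoidDefs

open Multiset

section Atoms

variable {G : Type*} [AddCommGroup G]

theorem isMinZS_singleton_zero : IsMinZS G {0} :=
  ⟨singleton_ne_zero 0, sum_singleton 0, fun _ hT hT0 hTS => by
    rcases le_singleton.mp hT with h | h
    · exact absurd h hT0
    · exact absurd h hTS⟩

theorem isMinZS_pair {g : G} (hg : g ≠ 0) : IsMinZS G {g, -g} := by
  refine ⟨cons_ne_zero, by simp, fun T hT hT0 hTS => ?_⟩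
  have hcard : card T ≤ 2 := by simpa using card_le_card hT
  interval_cases h : card T
  · exact absurd (card_eq_zero.mp h) hT0
  · obtain ⟨a, rfl⟩ := card_eq_one.mp h
    have ha : a ∈ ({g, -g} : Multiset G) := mem_of_le hT (mem_singleton_self a)
    simp only [insert_eq_cons, mem_cons, mem_singleton] at ha
    rcases ha with rfl | rfl <;> simpa
  · exact absurd (eq_of_le_of_card_le hT (by simp [h])) hTS

theorem IsMinZS.map_addEquiv {G' : Type*} [AddCommGroup G'] (e : G ≃+ G') {S : Multiset G}
    (h : IsMinZS G S) : IsMinZS G' (S.map e) := by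
  obtain ⟨hS0, hSsum, hmin⟩ := h
  refine ⟨mt map_eq_zero.mp hS0, by rw [← map_multiset_sum, hSsum, e.map_zero],
    fun T hT hT0 hTS => ?_⟩
  have hT' : T = (T.map e.symm).map e := by simp [map_map]
  rw [hT', map_le_map_iff e.injective] at hT
  rw [hT', ← map_multiset_sum, e.map_ne_zero_iff]
  exact hmin _ hT (by rintro h; simp [h] at hT'; exact hT0 hT')
    (by rintro rfl; exact hTS hT')

theorem IsMinZS.zero_notMem {S : Multiset G} (h : IsMinZS G S) (hS : S ≠ {0}) : (0 : G) ∉ S :=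
  fun h0 => h.2.2 {0} (singleton_le.mpr h0) (singleton_ne_zero 0) (Ne.symm hS) (sum_singleton 0)

theorem IsMinZS.count_le_card [Fintype G] [DecidableEq G] {S : Multiset G} (h : IsMinZS G S)
    (g : G) : S.count g ≤ Fintype.card G := by
  by_contra! hc
  have hpos : 0 < Fintype.card G := Fintype.card_pos
  -- `|G| • g = 0`, so `g^|G|` would be a proper zero-sum subsequence
  refine h.2.2 (replicate (Fintype.card G) g) ?_ ?_ ?_ (by simp [card_nsmul_eq_zero])
  · exact le_count_iff_replicate_le.mp hc.le
  · exact mt card_eq_zero.mpr (by simp)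
  · rintro rfl
    simp at hc

theorem IsMinZS.card_le [Fintype G] {S : Multiset G} (h : IsMinZS G S) :
    card S ≤ Fintype.card G * Fintype.card G := by
  classical
  calc card S = ∑ a ∈ S.toFinset, S.count a := (toFinset_sum_count_eq S).symm
    _ ≤ S.toFinset.card • Fintype.card G :=
        Finset.sum_le_card_nsmul _ _ _ fun a _ => h.count_le_card a
    _ ≤ Fintype.card G * Fintype.card G :=
        Nat.mul_le_mul_right _ (Finset.card_le_univ _)

theorem sum_map_pair_neg (U : Multiset G) :
    (U.map fun g => ({g, -g} : Multiset G)).sum = U + U.map Neg.neg := by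
  have hpair : ∀ g : G, ({g, -g} : Multiset G) = {g} + {-g} := fun _ => rfl
  simp only [hpair, sum_map_add, sum_map_singleton]
  rw [← sum_map_singleton (U.map Neg.neg), map_map]
  rfl

end Atoms

section Davenport

variable (G : Type*) [AddCommGroup G] [Fintype G]

theorem bddAbove_atom_lengths :
    BddAbove {n : ℕ | ∃ S : Multiset G, IsMinZS G S ∧ card S = n} :=
  ⟨Fintype.card G * Fintype.card G, by rintro _ ⟨S, hS, rfl⟩; exact hS.card_le⟩

theorem exists_isMinZS_card_eq_dav : ∃ U : Multiset G, IsMinZS G U ∧ card U = Dav G :=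
  Nat.sSup_mem (by exact ⟨1, {0}, isMinZS_singleton_zero, card_singleton 0⟩)
    (bddAbove_atom_lengths G)

variable {G}

theorem IsMinZS.card_le_dav {S : Multiset G} (h : IsMinZS G S) : card S ≤ Dav G :=
  le_csSup (bddAbove_atom_lengths G) ⟨S, h, rfl⟩

theorem two_le_dav [Nontrivial G] : 2 ≤ Dav G := by
  obtain ⟨g, hg⟩ := exists_ne (0 : G)
  exact (isMinZS_pair hg).card_le_dav

end Davenport

section Weight

variable {G : Type*} [AddCommGroup G] [DecidableEq G]

def zeroWeightedLength : Multiset G →+ ℕ := cardHom + countAddMonoidHom 0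

theorem zeroWeightedLength_apply (S : Multiset G) :
    zeroWeightedLength S = card S + S.count 0 := rfl

theorem IsMinZS.two_le_zeroWeightedLength {S : Multiset G} (h : IsMinZS G S) :
    2 ≤ zeroWeightedLength S := by
  rw [zeroWeightedLength_apply]
  by_cases hS : S = {0}
  · simp [hS]
  · have h1 : card S ≠ 1 := fun h1 => by
      obtain ⟨a, rfl⟩ := card_eq_one.mp h1
      exact hS (by simpa using h.2.1)
    have h0 : card S ≠ 0 := mt card_eq_zero.mp h.1
    omega

theorem IsMinZS.zeroWeightedLength_le_dav [Fintype G] (hD : 2 ≤ Dav G) {S : Multiset G}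
    (h : IsMinZS G S) : zeroWeightedLength S ≤ Dav G := by
  rw [zeroWeightedLength_apply]
  by_cases hS : S = {0}
  · simpa [hS] using hD
  · simpa [count_eq_zero.mpr (h.zero_notMem hS)] using h.card_le_dav

theorem IsProdOfAtoms.two_mul_le_zeroWeightedLength {m : ℕ} {S : Multiset G}
    (h : IsProdOfAtoms G m S) : 2 * m ≤ zeroWeightedLength S := by
  obtain ⟨L, rfl, hL, rfl⟩ := h
  rw [map_multiset_sum, mul_comm, ← smul_eq_mul, ← card_map zeroWeightedLength L]
  exact card_nsmul_le_sum fun _ hx => by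
    obtain ⟨U, hU, rfl⟩ := mem_map.mp hx
    exact (hL U hU).two_le_zeroWeightedLength

theorem IsProdOfAtoms.zeroWeightedLength_le [Fintype G] (hD : 2 ≤ Dav G) {k : ℕ}
    {S : Multiset G} (h : IsProdOfAtoms G k S) : zeroWeightedLength S ≤ k * Dav G := by
  obtain ⟨L, rfl, hL, rfl⟩ := h
  rw [map_multiset_sum, ← smul_eq_mul, ← card_map zeroWeightedLength L]
  exact sum_le_card_nsmul _ _ fun _ hx => by
    obtain ⟨U, hU, rfl⟩ := mem_map.mp hx
    exact (hL U hU).zeroWeightedLength_le_dav hD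

end Weight

section Elasticity

variable {G : Type*} [AddCommGroup G]

theorem two_mul_le_mul_dav_of_mem_UkSet [Fintype G] (hD : 2 ≤ Dav G) {n m : ℕ}
    (hm : m ∈ UkSet G n) : 2 * m ≤ n * Dav G := by
  classical
  obtain ⟨S, hn, hm⟩ := hm
  exact hm.two_mul_le_zeroWeightedLength.trans (hn.zeroWeightedLength_le hD)

theorem mul_card_add_one_mem_UkSet {U : Multiset G} (hU : IsMinZS G U) (hU0 : U ≠ {0}) (k : ℕ) :
    k * card U + 1 ∈ UkSet G (2 * k + 1) := by
  let pairs := U.map fun g => ({g, -g} : Multiset G)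
  refine ⟨(k • {U} + k • {U.map (AddEquiv.neg G)} + {{0}} : Multiset (Multiset G)).sum,
    ⟨_, by simp only [card_add, card_nsmul, card_singleton]; ring, ?_, rfl⟩,
    ⟨k • pairs + {{0}}, by simp [pairs], ?_, ?_⟩⟩
  · simp only [mem_add, mem_nsmul, mem_singleton]
    rintro V ((⟨-, rfl⟩ | ⟨-, rfl⟩) | rfl)
    · exact hU
    · exact hU.map_addEquiv _
    · exact isMinZS_singleton_zero
  · simp only [mem_add, mem_nsmul, mem_singleton]
    rintro V (⟨-, hV⟩ | rfl)
    · obtain ⟨g, hg, rfl⟩ := mem_map.mp hV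
      exact isMinZS_pair fun h0 => hU.zero_notMem hU0 (h0 ▸ hg)
    · exact isMinZS_singleton_zero
  · simp only [sum_add, sum_nsmul, sum_singleton, pairs, sum_map_pair_neg, smul_add]
    rfl

end Elasticity

/-- If `|G| ≥ 3` then `k·D(G) + 1 ≤ ρ_{2k+1}(G) ≤ k·D(G) + ⌊D(G)/2⌋`
for every `k ∈ ℕ`. -/
theorem stmt2 (G : Type*) [AddCommGroup G] [Fintype G] (hG : 3 ≤ Fintype.card G) :
    ∀ k : ℕ, 1 ≤ k →
      k * Dav G + 1 ≤ rho G (2 * k + 1) ∧ rho G (2 * k + 1) ≤ k * Dav G + Dav G / 2 := by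
  intro k _
  have : Nontrivial G := Fintype.one_lt_card_iff_nontrivial.mp (by omega)
  have hD : 2 ≤ Dav G := two_le_dav
  have hbound : ∀ m ∈ UkSet G (2 * k + 1), m ≤ k * Dav G + Dav G / 2 := fun m hm => by
    have := two_mul_le_mul_dav_of_mem_UkSet hD hm
    rw [add_mul, mul_assoc, one_mul] at this
    omega
  obtain ⟨U, hU, hUcard⟩ := exists_isMinZS_card_eq_dav G
  have hU0 : U ≠ {0} := fun h => by simp [h] at hUcard; omega
  have hmem := mul_card_add_one_mem_UkSet hU hU0 k
  rw [hUcard] at hmem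
  exact ⟨le_csSup ⟨_, hbound⟩ hmem, csSup_le ⟨_, hmem⟩ hbound⟩
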